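/- arXiv:2204.03579 — 3 statements merged into one kernel-verified Lean document; each statement's English description precedes it below -/
import Mathlib

section
/- Let Y be an S-scattered topological space, α > 0 an ordinal, and x ∈ SI_α(Y). Then for every β < α there is an injective sequence s : ω → Y converging to x such that the range of s is contained in ⋃{SI_γ(Y) : β ≤ γ < α}. -/
open Filter Topology Set

/-- Sequential Cantor-Bendixson levels. -/
noncomputable def SI (Y : Type) [TopologicalSpace Y] : Ordinal.{0} → Set Y :=
  fun α =>
    {x | (∀ β, β < α → x ∉ SI Y β) ∧
      ¬ ∃ s : ℕ → Y, Function.Injective s ∧ (∀ n, ∀ β, β < α → s n ∉ SI Y β) ∧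
        Filter.Tendsto s Filter.atTop (nhds x)}
termination_by α => α
decreasing_by all_goals assumption

/-- The sequential height of `Y`. -/
noncomputable def Sh (Y : Type) [TopologicalSpace Y] : Ordinal.{0} :=
  sInf {α | SI Y α = ∅}

lemma mem_SI_iff (Y : Type) [TopologicalSpace Y] (α : Ordinal.{0}) (x : Y) :
    x ∈ SI Y α ↔ (∀ β, β < α → x ∉ SI Y β) ∧
      ¬ ∃ s : ℕ → Y, Function.Injective s ∧ (∀ n, ∀ β, β < α → s n ∉ SI Y β) ∧
        Filter.Tendsto s Filter.atTop (nhds x) := by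
  rw [SI]; exact Iff.rfl

lemma SI_disjoint (Y : Type) [TopologicalSpace Y] {γ δ : Ordinal.{0}} {y : Y}
    (hy : y ∈ SI Y γ) (h : δ < γ) : y ∉ SI Y δ :=
  ((mem_SI_iff Y γ y).1 hy).1 δ h

/-- In an S-scattered space, if `x ∈ SI Y α` with `α > 0`, then for every `β < α`
there is an injective sequence converging to `x` whose range lies in
`⋃ {SI Y γ : β ≤ γ < α}`. -/
theorem SI_converging_sequence (Y : Type) [TopologicalSpace Y]
    (hsc : ∀ y : Y, ∃ γ, γ < Sh Y ∧ y ∈ SI Y γ)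
    (α : Ordinal.{0}) (hα : 0 < α) (x : Y) (hx : x ∈ SI Y α) :
    ∀ β, β < α → ∃ s : ℕ → Y, Function.Injective s ∧
      Filter.Tendsto s Filter.atTop (nhds x) ∧
      ∀ n, ∃ γ, β ≤ γ ∧ γ < α ∧ s n ∈ SI Y γ := by
  intro β hβα
  obtain ⟨hx1, hx2⟩ := (mem_SI_iff Y α x).1 hx
  have hxβ : x ∉ SI Y β := hx1 β hβα
  rw [mem_SI_iff] at hxβ
  push_neg at hxβ
  obtain ⟨s, hsinj, hslow, hstend⟩ := hxβ (fun γ hγ => hx1 γ (hγ.trans hβα))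
  · -- choose level of each s n
    choose g hg1 hg2 using fun n => hsc (s n)
    have hgβ : ∀ n, β ≤ g n := by
      intro n
      by_contra h
      exact hslow n (g n) (lt_of_not_ge h) (hg2 n)
    -- the set of indices with level ≥ α is finite
    have hBfin : {n : ℕ | α ≤ g n}.Finite := by
      by_contra hinf
      have hinf : {n : ℕ | α ≤ g n}.Infinite := hinf
      let f := hinf.natEmbedding
      have hf : ∀ k, α ≤ g (f k) := fun k => (f k).2
      apply hx2
      have hfinj : Function.Injective (fun k => ((f k : ℕ))) := fun a b h =>
        f.injective (Subtype.ext h)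
      refine ⟨s ∘ (fun k => (f k : ℕ)), hsinj.comp hfinj, ?_, ?_⟩
      · intro n δ hδα
        exact SI_disjoint Y (hg2 (f n)) (lt_of_lt_of_le hδα (hf n))
      · refine hstend.comp ?_
        rw [← Nat.cofinite_eq_atTop]
        exact hfinj.tendsto_cofinite
    obtain ⟨N, hN⟩ := hBfin.bddAbove
    refine ⟨fun n => s (n + N + 1), fun a b h => by simpa using hsinj h, ?_, ?_⟩
    · exact hstend.comp (tendsto_atTop_atTop_of_monotone
        (fun a b hab => by omega) (fun b => ⟨b, by omega⟩))
    · intro n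
      refine ⟨g (n + N + 1), hgβ _, ?_, hg2 _⟩
      by_contra h
      have : n + N + 1 ∈ {n : ℕ | α ≤ g n} := le_of_not_gt h
      have := hN this
      omega
end

section
/- Suppose ⟨A_α^m : α < ω₁, m < ω⟩ is a ♣_F-sequence. Then there is a regular topology τ on ω₁, refining the order topology, such that (ω₁, τ) → (top ω+1)^1_ω, (ω₁, τ) ↛ (top ω²+1)^1_ω, and for every countable limit ordinal α and every m < ω there is a strictly increasing sequence of elements of A_α^m converging to α in τ. -/
open Set Filter Topology

noncomputable def omega1 : Ordinal.{0} := (Cardinal.aleph 1).ord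

def UnbddSub (A : Set Ordinal.{0}) (α : Ordinal.{0}) : Prop :=
  A ⊆ Set.Iio α ∧ ∀ β, β < α → ∃ γ ∈ A, β ≤ γ

def IsClubF (A : Ordinal.{0} → ℕ → Set Ordinal.{0}) : Prop :=
  (∀ α, α < omega1 → Order.IsSuccLimit α → ∀ m : ℕ, UnbddSub (A α m) α) ∧
  ∀ f : Ordinal.{0} → ℕ, ∃ α n m, α < omega1 ∧ Order.IsSuccLimit α ∧
    f α = n ∧ ∀ γ ∈ A α m, f γ = n

/-- The set ω₁, as a type. -/
def W : Type 1 := {β : Ordinal.{0} // β < omega1}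

noncomputable instance : LinearOrder W := inferInstanceAs (LinearOrder {β : Ordinal.{0} // β < omega1})

/-- `(W, t) → (top α)¹_ω`: every countable colouring admits a monochromatic
subspace homeomorphic to the ordinal `α` with its order topology. -/
def ArrowTopT (t : TopologicalSpace W) (α : Ordinal.{0}) : Prop :=
  letI := t
  ∀ f : W → ℕ, ∃ (n : ℕ) (Y : Set W), Y ⊆ f ⁻¹' {n} ∧ Nonempty (Y ≃ₜ Set.Iio α)

/-!
Choose, for every countable limit `α` and every `m`, a ladder (a strictly increasing sequence
with supremum `α`) inside `A α m`, and give ω₁ the finest topology in which every ladder converges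
to its top. This refines the order topology, and it is regular: inside an open `U ∋ β`, a clopen
neighbourhood of `β` is obtained by well-founded recursion, attaching to the late steps of the
ladders at `β` clopen neighbourhoods of those steps (`clopenNhd`).

For a colouring `f`, the ♣_F property gives `α` and `m` with `A α m ∪ {α}` monochromatic, and the
ladder inside `A α m` together with `α` is a copy of `ω + 1`. There is no copy of `ω² + 1`: if `p`
is the image of `ω²` and `c j` that of `ω * (j + 1)`, pick `d j` close to `c j` and off the first
`j + 1` ladders at `p`. Then `d j → p`, yet the complement of `{d j | j}` is open, since every
ladder at `p` meets this set in finitely many points and ladders at other points stay away from `p`.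
-/

open Function

theorem Filter.Tendsto.exists_isOpen_inter_insert_range_subset {X : Type*} [TopologicalSpace X]
    [T2Space X] {s : ℕ → X} {x y : X} (hs : Tendsto s atTop (𝓝 x)) (hy : y ≠ x) :
    ∃ V, IsOpen V ∧ y ∈ V ∧ V ∩ insert x (range s) ⊆ {y} := by
  obtain ⟨U, U', hU, hU', hyU, hxU', hUU'⟩ := t2_separation hy
  obtain ⟨K, hK⟩ := eventually_atTop.1 (hs.eventually (hU'.mem_nhds hxU'))
  have hF : IsClosed (s '' Iio K \ {y}) := ((finite_Iio K).image s).sdiff.isClosed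
  refine ⟨U ∩ (s '' Iio K \ {y})ᶜ, hU.inter hF.isOpen_compl, ⟨hyU, fun h => h.2 rfl⟩, ?_⟩
  rintro z ⟨⟨hzU, hzF⟩, rfl | ⟨k, rfl⟩⟩
  · exact (hUU'.ne_of_mem hzU hxU' rfl).elim
  · by_contra hne
    rcases lt_or_ge k K with hk | hk
    · exact hzF ⟨mem_image_of_mem s hk, hne⟩
    · exact hUU'.ne_of_mem hzU (hK k hk) rfl

noncomputable def Filter.Tendsto.onePointNatHomeomorph {X : Type*} [TopologicalSpace X]
    [T2Space X] {s : ℕ → X} {x : X} (hs : Tendsto s atTop (𝓝 x)) (hinj : Injective s)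
    (hne : ∀ k, s k ≠ x) : OnePoint ℕ ≃ₜ (insert x (range s) : Set X) :=
  haveI : CompactSpace (insert x (range s) : Set X) :=
    isCompact_iff_compactSpace.1 hs.isCompact_insert_range
  OnePoint.equivOfIsEmbeddingOfRangeEq ⟨x, mem_insert x _⟩
    (fun k => ⟨s k, mem_insert_of_mem x (mem_range_self k)⟩)
    (IsInducing.isEmbedding ⟨Eq.symm <| eq_bot_of_singletons_open fun k => by
      obtain ⟨V, hV, hkV, hVs⟩ := hs.exists_isOpen_inter_insert_range_subset (hne k)
      refine ⟨Subtype.val ⁻¹' V, hV.preimage continuous_subtype_val,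
        eq_singleton_iff_unique_mem.2 ⟨hkV, fun j hj => hinj ?_⟩⟩
      exact hVs ⟨hj, mem_insert_of_mem x (mem_range_self j)⟩⟩)
    (by ext ⟨y, rfl | ⟨k, rfl⟩⟩ <;> simp [Subtype.ext_iff, hne])

section LadderTopology

variable {X : Type*} (L : X → ℕ → ℕ → X)

/-- The finest topology in which every sequence `L x m` converges to `x`. -/
@[reducible] def ladderTopology : TopologicalSpace X where
  IsOpen U := ∀ x ∈ U, ∀ m, ∀ᶠ k in atTop, L x m k ∈ U
  isOpen_univ _ _ _ := univ_mem
  isOpen_inter _ _ hU hV x hx m := (hU x hx.1 m).and (hV x hx.2 m)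
  isOpen_sUnion _ hS x := fun ⟨U, hU, hxU⟩ m =>
    (hS U hU x hxU m).mono fun _ hk => ⟨U, hU, hk⟩

theorem tendsto_ladderTopology (x : X) (m : ℕ) :
    Tendsto (L x m) atTop (@nhds X (ladderTopology L) x) := by
  let _ := ladderTopology L
  exact tendsto_nhds.2 fun U hU hxU => hU x hxU m

variable {L}

theorem not_tendsto_ladderTopology_of_notMem_range [@T2Space X (ladderTopology L)] {p : X}
    {d : ℕ → X} (hne : ∀ j, d j ≠ p) (havoid : ∀ j, ∀ m ≤ j, d j ∉ range (L p m)) :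
    ¬ Tendsto d atTop (@nhds X (ladderTopology L) p) := by
  let _ := ladderTopology L
  intro hd
  have hfin : ∀ x m, {j | d j ∈ range (L x m)}.Finite := by
    intro x m
    rcases eq_or_ne x p with rfl | hxp
    · exact (finite_Iio m).subset fun j hj => not_le.1 fun hmj => havoid j m hmj hj
    · obtain ⟨V, hV, hpV, hVs⟩ :=
        (tendsto_ladderTopology L x m).exists_isOpen_inter_insert_range_subset hxp.symm
      obtain ⟨J, hJ⟩ := eventually_atTop.1 (hd.eventually (hV.mem_nhds hpV))
      exact (finite_Iio J).subset fun j hj => not_le.1 fun hJj =>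
        hne j (hVs ⟨hJ j hJj, mem_insert_of_mem x hj⟩)
  have hopen : IsOpen (range d)ᶜ := by
    intro x hx m
    have hF : (d '' {j | d j ∈ range (L x m)})ᶜ ∈ 𝓝 x :=
      ((hfin x m).image d).isClosed.isOpen_compl.mem_nhds fun ⟨j, _, hj⟩ => hx ⟨j, hj⟩
    filter_upwards [tendsto_ladderTopology L x m hF] with k hk ⟨j, hj⟩
    exact hk ⟨j, ⟨k, hj.symm⟩, hj⟩
  obtain ⟨j, hj⟩ := (hd.eventually (hopen.mem_nhds fun ⟨j, hj⟩ => hne j hj)).exists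
  exact hj ⟨j, rfl⟩

end LadderTopology

namespace Ordinal

theorem tendsto_add_natCast (o : Ordinal) : Tendsto (fun n : ℕ => o + n) atTop (𝓝 (o + ω)) := by
  rw [← iSup_add_natCast]
  exact tendsto_atTop_ciSup (fun _ _ h => by gcongr) bddAbove_of_small

theorem tendsto_mul_natCast (o : Ordinal) : Tendsto (fun n : ℕ => o * n) atTop (𝓝 (o * ω)) := by
  rw [← iSup_mul_natCast]
  exact tendsto_atTop_ciSup (fun _ _ h => by gcongr) bddAbove_of_small

theorem omega0_mul_natCast_add_omega0_lt (j : ℕ) : ω * j + ω < ω ^ (2 : ℕ) := by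
  rw [← mul_add_one, sq]
  exact mul_lt_mul_of_pos_left (mod_cast natCast_lt_omega0 (j + 1)) omega0_pos

noncomputable def onePointNatHomeomorph : OnePoint ℕ ≃ₜ Iio (ω + 1 : Ordinal.{0}) :=
  ((by simpa using tendsto_add_natCast 0 : Tendsto (Nat.cast : ℕ → Ordinal.{0}) atTop (𝓝 ω))
    |>.onePointNatHomeomorph Nat.cast_injective fun k => (natCast_lt_omega0 k).ne).trans
    (Homeomorph.setCongr (by
      ext x
      simp [Order.lt_add_one_iff, le_iff_lt_or_eq, lt_omega0, eq_comm, or_comm]))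

end Ordinal

open Ordinal in
theorem not_injective_of_continuous_ladderTopology {X : Type*} {L : X → ℕ → ℕ → X}
    [@T2Space X (ladderTopology L)] {g : Iio (ω ^ (2 : ℕ) + 1 : Ordinal.{0}) → X}
    (hg : Continuous[_, ladderTopology L] g) : ¬ Injective g := by
  let _ := ladderTopology L
  intro hinj
  have hlt : ∀ (j : ℕ) {a}, a ≤ ω → ω * j + a < ω ^ (2 : ℕ) := fun j a ha =>
    lt_of_le_of_lt (by gcongr) (omega0_mul_natCast_add_omega0_lt j)
  let pt (j n : ℕ) : Iio (ω ^ (2 : ℕ) + 1 : Ordinal.{0}) :=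
    ⟨ω * j + n, (hlt j (natCast_lt_omega0 n).le).trans (lt_add_one _)⟩
  let lim (j : ℕ) : Iio (ω ^ (2 : ℕ) + 1 : Ordinal.{0}) :=
    ⟨ω * j + ω, (hlt j le_rfl).trans (lt_add_one _)⟩
  let top : Iio (ω ^ (2 : ℕ) + 1 : Ordinal.{0}) := ⟨ω ^ (2 : ℕ), mem_Iio.2 (lt_add_one _)⟩
  have havoid : ∀ j, ∀ᶠ n in atTop, ∀ m ∈ Iic j, g (pt j n) ∉ range (L (g top) m) := by
    intro j
    refine (finite_Iic j).eventually_all.2 fun m _ => ?_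
    have hconv : Tendsto (fun n => g (pt j n)) atTop (𝓝 (g (lim j))) :=
      hg.continuousAt.tendsto.comp <|
        IsInducing.subtypeVal.tendsto_nhds_iff.2 (tendsto_add_natCast _)
    have hne : g (lim j) ≠ g top := hinj.ne fun h => (hlt j le_rfl).ne (congrArg Subtype.val h)
    obtain ⟨V, hV, hjV, hVs⟩ :=
      (tendsto_ladderTopology L (g top) m).exists_isOpen_inter_insert_range_subset hne
    filter_upwards [hconv.eventually (hV.mem_nhds hjV)] with n hn hmem
    have := hinj (hVs ⟨hn, mem_insert_of_mem _ hmem⟩)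
    exact ((add_lt_add_iff_left _).2 (natCast_lt_omega0 n)).ne (congrArg Subtype.val this)
  choose n hn using fun j => (havoid j).exists
  have hconv : Tendsto (fun j => ω * j + n j) atTop (𝓝 (ω ^ (2 : ℕ))) := by
    refine tendsto_of_tendsto_of_tendsto_of_le_of_le ?_ tendsto_const_nhds
      (fun j => le_self_add) (fun j => (hlt j (natCast_lt_omega0 _).le).le)
    simpa [sq] using tendsto_mul_natCast ω
  exact not_tendsto_ladderTopology_of_notMem_range
    (fun j => hinj.ne fun h => (hlt j (natCast_lt_omega0 (n j)).le).ne (congrArg Subtype.val h))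
    (fun j m hm => hn j m hm)
    (hg.continuousAt.tendsto.comp (IsInducing.subtypeVal.tendsto_nhds_iff.2 hconv))

section LadderSystem

variable {X : Type*} [LinearOrder X]

def IsLadder (s : ℕ → X) (x : X) : Prop :=
  StrictMono s ∧ IsLUB (range s) x

theorem IsLadder.lt {s : ℕ → X} {x : X} (h : IsLadder s x) (k : ℕ) : s k < x :=
  (h.1 (Nat.lt_succ_self k)).trans_le (h.2.1 (mem_range_self _))

theorem IsLadder.eventually_gt {s : ℕ → X} {x y : X} (h : IsLadder s x) (hy : y < x) :
    ∀ᶠ k in atTop, y < s k := by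
  obtain ⟨_, ⟨k, rfl⟩, hk⟩ := (lt_isLUB_iff h.2).1 hy
  exact eventually_atTop.2 ⟨k, fun j hj => hk.trans_le (h.1.monotone hj)⟩

theorem exists_isLadder_of_countable {S : Set X} {x : X}
    (hSx : S ⊆ Iio x) (hS : S.Countable) (hne : S.Nonempty) (hcof : ∀ y < x, ∃ z ∈ S, y < z) :
    ∃ s : ℕ → X, IsLadder s x ∧ ∀ k, s k ∈ S := by
  have : Countable S := hS.to_subtype
  have : Nonempty S := hne.to_subtype
  have : NoMaxOrder S := ⟨fun z => by
    obtain ⟨w, hw, hzw⟩ := hcof z (hSx z.2)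
    exact ⟨⟨w, hw⟩, hzw⟩⟩
  obtain ⟨u, hu⟩ := exists_seq_tendsto (atTop : Filter S)
  obtain ⟨φ, hφ, huφ⟩ := strictMono_subseq_of_tendsto_atTop hu
  have hlim : Tendsto (u ∘ φ) atTop atTop := hu.comp hφ.tendsto_atTop
  refine ⟨fun k => (u (φ k)).1, ⟨fun _ _ h => huφ h, ?_, fun b hb => ?_⟩, fun k => (u (φ k)).2⟩
  · rintro _ ⟨k, rfl⟩
    exact (hSx (u (φ k)).2).le
  · by_contra! hbx
    obtain ⟨z, hz, hbz⟩ := hcof b hbx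
    obtain ⟨k, hk⟩ := (hlim.eventually_ge_atTop ⟨z, hz⟩).exists
    exact (hbz.trans_le hk).not_ge (hb ⟨k, rfl⟩)

/-- Points that carry constant sequences are isolated in `ladderTopology L`. -/
def IsLadderSystem (L : X → ℕ → ℕ → X) : Prop :=
  ∀ x, (∀ m k, L x m k = x) ∨ ∀ m, IsLadder (L x m) x

variable {L : X → ℕ → ℕ → X}

theorem IsLadderSystem.le (hL : IsLadderSystem L) (x : X) (m k : ℕ) : L x m k ≤ x := by
  rcases hL x with h | h
  · exact (h m k).le
  · exact ((h m).lt k).le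

theorem IsLadderSystem.eventually_gt (hL : IsLadderSystem L) {x y : X} (hy : y < x) (m : ℕ) :
    ∀ᶠ k in atTop, y < L x m k := by
  rcases hL x with h | h
  · exact .of_forall fun k => (h m k).symm ▸ hy
  · exact (h m).eventually_gt hy

theorem IsLadderSystem.ladderTopology_le (hL : IsLadderSystem L) :
    ladderTopology L ≤ Preorder.topology X := by
  refine TopologicalSpace.le_generateFrom_iff_subset_isOpen.2 ?_
  rintro _ ⟨a, rfl | rfl⟩ x hx m
  · exact hL.eventually_gt hx m
  · exact .of_forall fun k => (hL.le x m k).trans_lt hx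

theorem IsLadderSystem.t2Space (hL : IsLadderSystem L) : @T2Space X (ladderTopology L) :=
  let _ := Preorder.topology X
  have : OrderTopology X := ⟨rfl⟩
  t2Space_antitone hL.ladderTopology_le inferInstance

theorem IsLadderSystem.isLadder_of_lt (hL : IsLadderSystem L) {x : X} {m k : ℕ}
    (h : L x m k < x) (m' : ℕ) : IsLadder (L x m') x :=
  (hL x).resolve_left (fun hc => h.ne (hc m k)) m'

end LadderSystem

section Regularity

variable {X : Type*} [LinearOrder X] {L : X → ℕ → ℕ → X}

variable (L) in
/-- The step from `L β m j` to `L β m (j + 1)` carries a block of `clopenNhd L U β ε`. Blocks of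
the `m`-th ladder start above `L β 0 m`, so only finitely many blocks reach below any `x < β`. -/
def IsBlock (U : Set X) (β ε : X) (m j : ℕ) : Prop :=
  (∀ k ≥ j, L β m k ∈ U) ∧ ε < L β m j ∧ L β 0 m < L β m j ∧ L β m (j + 1) < β

theorem IsBlock.lt_succ (hL : IsLadderSystem L) {U : Set X} {β ε : X} {m j : ℕ}
    (hb : IsBlock L U β ε m j) : L β m j < L β m (j + 1) :=
  (hL.isLadder_of_lt hb.2.2.2 m).1 (Nat.lt_succ_self j)

theorem finite_isBlock_lt (hL : IsLadderSystem L) {U : Set X} {β ε x : X} (hx : x < β) :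
    {mj : ℕ × ℕ | IsBlock L U β ε mj.1 mj.2 ∧ L β mj.1 mj.2 < x}.Finite := by
  rcases hL β with hc | hlad
  · exact finite_empty.subset fun mj h => (h.1.2.2.2.ne (hc _ _)).elim
  obtain ⟨M, hM⟩ := eventually_atTop.1 ((hlad 0).eventually_gt hx)
  choose J hJ using fun m => eventually_atTop.1 ((hlad m).eventually_gt hx)
  refine ((finite_Iio M).biUnion fun m _ => (finite_Iio (J m)).image (Prod.mk m)).subset ?_
  rintro ⟨m, j⟩ ⟨hb, hjx⟩
  refine mem_biUnion (x := m) ?_ ⟨j, ?_, rfl⟩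
  · exact not_le.1 fun hm => (hM m hm).not_gt (hb.2.2.1.trans hjx)
  · exact not_le.1 fun hj => (hJ m j hj).not_gt hjx

variable (L) in
noncomputable def clopenNhd [WellFoundedLT X] (U : Set X) (β ε : X) : Set X :=
  insert β (⋃ (m) (j) (_ : IsBlock L U β ε m j), clopenNhd U (L β m (j + 1)) (L β m j))
termination_by wellFounded_lt.wrap β
decreasing_by exact ‹IsBlock L U β ε m j›.2.2.2

variable [WellFoundedLT X]

theorem mem_clopenNhd {U : Set X} {β ε x : X} : x ∈ clopenNhd L U β ε ↔
    x = β ∨ ∃ m j, IsBlock L U β ε m j ∧ x ∈ clopenNhd L U (L β m (j + 1)) (L β m j) := by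
  rw [clopenNhd]
  simp [-exists_prop]

variable {U : Set X}

theorem self_mem_clopenNhd (β ε : X) : β ∈ clopenNhd L U β ε :=
  mem_clopenNhd.2 (.inl rfl)

theorem IsBlock.subset_clopenNhd {β ε : X} {m j : ℕ} (hb : IsBlock L U β ε m j) :
    clopenNhd L U (L β m (j + 1)) (L β m j) ⊆ clopenNhd L U β ε :=
  fun _ hx => mem_clopenNhd.2 (.inr ⟨m, j, hb, hx⟩)

theorem clopenNhd_subset (hL : IsLadderSystem L) (β ε : X) :
    clopenNhd L U β ε ⊆ insert β (Ioo ε β) := by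
  induction β using WellFoundedLT.induction generalizing ε with | _ β ih
  intro x hx
  rcases mem_clopenNhd.1 hx with rfl | ⟨m, j, hb, hx⟩
  · exact mem_insert _ _
  refine .inr ?_
  rcases ih _ hb.2.2.2 _ hx with rfl | ⟨h₁, h₂⟩
  · exact ⟨hb.2.1.trans (hb.lt_succ hL), hb.2.2.2⟩
  · exact ⟨hb.2.1.trans h₁, h₂.trans hb.2.2.2⟩

theorem IsBlock.subset_Ioc (hL : IsLadderSystem L) {β ε : X} {m j : ℕ}
    (hb : IsBlock L U β ε m j) :
    clopenNhd L U (L β m (j + 1)) (L β m j) ⊆ Ioc (L β m j) (L β m (j + 1)) := by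
  intro x hx
  rcases clopenNhd_subset hL _ _ hx with rfl | hx
  · exact ⟨hb.lt_succ hL, le_rfl⟩
  · exact Ioo_subset_Ioc_self hx

theorem clopenNhd_subset_of_mem (β ε : X) (hβ : β ∈ U) : clopenNhd L U β ε ⊆ U := by
  induction β using WellFoundedLT.induction generalizing ε with | _ β ih
  intro x hx
  rcases mem_clopenNhd.1 hx with rfl | ⟨m, j, hb, hx⟩
  · exact hβ
  · exact ih _ hb.2.2.2 _ (hb.1 _ j.le_succ) hx

theorem isOpen_clopenNhd (hL : IsLadderSystem L) (hU : IsOpen[ladderTopology L] U) (β ε : X)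
    (hβ : β ∈ U) (hε : ε < β) : IsOpen[ladderTopology L] (clopenNhd L U β ε) := by
  induction β using WellFoundedLT.induction generalizing ε with | _ β ih
  intro x hx m
  rcases mem_clopenNhd.1 hx with rfl | ⟨m', j, hb, hx⟩
  · rcases hL x with hc | hlad
    · exact .of_forall fun k => (hc m k).symm ▸ self_mem_clopenNhd x ε
    obtain ⟨K, hK⟩ := eventually_atTop.1 (hU x hβ m)
    have hblock : ∀ᶠ j in atTop, IsBlock L U x ε m j := by
      filter_upwards [eventually_ge_atTop K, (hlad m).eventually_gt hε,
        (hlad m).eventually_gt ((hlad 0).lt m)] with j hj h₁ h₂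
      exact ⟨fun k hk => hK k (hj.trans hk), h₁, h₂, (hlad m).lt _⟩
    have hroot : ∀ᶠ j in atTop, L x m (j + 1) ∈ clopenNhd L U x ε :=
      hblock.mono fun j hb => hb.subset_clopenNhd (self_mem_clopenNhd _ _)
    exact tendsto_principal.1 <| (tendsto_add_atTop_iff_nat 1).1 <| tendsto_principal.2 hroot
  · have hopen := ih _ hb.2.2.2 _ (hb.1 _ j.le_succ) (hb.lt_succ hL)
    exact (hopen x hx m).mono fun k hk => hb.subset_clopenNhd hk

theorem eventually_notMem_clopenNhd (hL : IsLadderSystem L) (β ε : X) {x : X}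
    (hx : x ∉ clopenNhd L U β ε) (m : ℕ) : ∀ᶠ k in atTop, L x m k ∉ clopenNhd L U β ε := by
  induction β using WellFoundedLT.induction generalizing ε with | _ β ih
  rcases lt_trichotomy x β with hxβ | rfl | hβx
  · have hblocks : ∀ᶠ k in atTop,
        ∀ mj ∈ {mj : ℕ × ℕ | IsBlock L U β ε mj.1 mj.2 ∧ L β mj.1 mj.2 < x},
          L x m k ∉ clopenNhd L U (L β mj.1 (mj.2 + 1)) (L β mj.1 mj.2) :=
      (finite_isBlock_lt hL hxβ).eventually_all.2 fun mj hmj =>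
        ih _ hmj.1.2.2.2 _ fun h => hx (hmj.1.subset_clopenNhd h)
    filter_upwards [hblocks] with k hk hmem
    rcases mem_clopenNhd.1 hmem with h | ⟨m', j, hb, hmem⟩
    · exact (hL.le x m k).not_gt (h ▸ hxβ)
    · exact hk (m', j) ⟨hb, (hb.subset_Ioc hL hmem).1.trans_le (hL.le x m k)⟩ hmem
  · exact (hx (self_mem_clopenNhd _ _)).elim
  · filter_upwards [hL.eventually_gt hβx m] with k hk hmem
    rcases clopenNhd_subset hL _ _ hmem with h | h
    · exact hk.ne' h
    · exact hk.not_gt h.2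

theorem isClosed_clopenNhd (hL : IsLadderSystem L) (β ε : X) :
    IsClosed[ladderTopology L] (clopenNhd L U β ε) := by
  let _ := ladderTopology L
  exact isOpen_compl_iff.1 fun _ hx m => eventually_notMem_clopenNhd hL β ε hx m

theorem IsLadderSystem.regularSpace (hL : IsLadderSystem L) :
    @RegularSpace X (ladderTopology L) := by
  let _ := ladderTopology L
  have := hL.t2Space
  refine .of_exists_mem_nhds_isClosed_subset fun x s hs => ?_
  obtain ⟨U, hUs, hU, hxU⟩ := mem_nhds_iff.1 hs
  rcases hL x with hc | hlad
  · have hx : IsOpen {x} := fun _ hy m => .of_forall fun k => by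
      obtain rfl := hy
      exact hc m k
    exact ⟨{x}, hx.mem_nhds rfl, isClosed_singleton, singleton_subset_iff.2 (hUs hxU)⟩
  · exact ⟨clopenNhd L U x (L x 0 0),
      (isOpen_clopenNhd hL hU x _ hxU ((hlad 0).lt 0)).mem_nhds (self_mem_clopenNhd _ _),
      isClosed_clopenNhd hL x _, (clopenNhd_subset_of_mem x _ hxU).trans hUs⟩

end Regularity

instance : WellFoundedLT W := inferInstanceAs (WellFoundedLT {β : Ordinal.{0} // β < omega1})

theorem countable_Iio_of_lt_omega1 {α : Ordinal.{0}} (hα : α < omega1) : (Iio α).Countable := by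
  rw [← Cardinal.le_aleph0_iff_set_countable, Cardinal.mk_Iio_ordinal, Cardinal.lift_le_aleph0,
    ← Cardinal.lt_aleph_one_iff, ← Cardinal.lt_ord]
  exact hα

theorem IsClubF.exists_isLadder {A : Ordinal.{0} → ℕ → Set Ordinal.{0}} (hA : IsClubF A) (α : W)
    (hα : Order.IsSuccLimit α.1) (m : ℕ) : ∃ s : ℕ → W, IsLadder s α ∧ ∀ k, (s k).1 ∈ A α.1 m := by
  obtain ⟨hsub, hunb⟩ := hA.1 α.1 α.2 hα m
  have hW : ∀ {δ}, δ ∈ A α.1 m → δ < omega1 := fun hδ => (hsub hδ).trans α.2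
  obtain ⟨δ₀, hδ₀, -⟩ := hunb 0 hα.pos
  refine exists_isLadder_of_countable (S := {γ : W | γ.1 ∈ A α.1 m}) (fun γ hγ => hsub hγ)
    ((countable_Iio_of_lt_omega1 α.2).preimage Subtype.val_injective |>.mono fun γ hγ => hsub hγ)
    ⟨⟨δ₀, hW hδ₀⟩, hδ₀⟩ fun y hy => ?_
  obtain ⟨δ, hδ, hyδ⟩ := hunb (Order.succ y.1) (hα.succ_lt hy)
  exact ⟨⟨δ, hW hδ⟩, hδ, (Order.lt_succ y.1).trans_le hyδ⟩

def IsLadderSelection (A : Ordinal.{0} → ℕ → Set Ordinal.{0}) (L : W → ℕ → ℕ → W) : Prop :=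
  ∀ α : W, Order.IsSuccLimit α.1 → ∀ m, IsLadder (L α m) α ∧ ∀ k, (L α m k).1 ∈ A α.1 m

theorem IsClubF.exists_ladderSystem {A : Ordinal.{0} → ℕ → Set Ordinal.{0}} (hA : IsClubF A) :
    ∃ L : W → ℕ → ℕ → W, IsLadderSystem L ∧ IsLadderSelection A L := by
  have : ∀ α : W, ∃ Lα : ℕ → ℕ → W, ((∀ m k, Lα m k = α) ∨ ∀ m, IsLadder (Lα m) α) ∧
      (Order.IsSuccLimit α.1 → ∀ m, IsLadder (Lα m) α ∧ ∀ k, (Lα m k).1 ∈ A α.1 m) := by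
    intro α
    by_cases hα : Order.IsSuccLimit α.1
    · choose s hs using hA.exists_isLadder α hα
      exact ⟨s, .inr fun m => (hs m).1, fun _ => hs⟩
    · exact ⟨fun _ _ => α, .inl fun _ _ => rfl, fun h => (hα h).elim⟩
  choose L hL₁ hL₂ using this
  exact ⟨L, hL₁, hL₂⟩

theorem arrowTopT_omega0_add_one {A : Ordinal.{0} → ℕ → Set Ordinal.{0}} (hA : IsClubF A)
    {L : W → ℕ → ℕ → W} [@T2Space W (ladderTopology L)] (hLA : IsLadderSelection A L) :
    ArrowTopT (ladderTopology L) (Ordinal.omega0 + 1) := by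
  let _ := ladderTopology L
  intro f
  obtain ⟨α, n, m, hα, hlim, hfα, hAf⟩ := hA.2 fun γ => if h : γ < omega1 then f ⟨γ, h⟩ else 0
  let p : W := ⟨α, hα⟩
  obtain ⟨hlad, hmem⟩ := hLA p hlim m
  refine ⟨n, insert p (range (L p m)), ?_, ⟨?_⟩⟩
  · rintro _ (rfl | ⟨k, rfl⟩)
    · simpa [hα] using hfα
    · have := hAf _ (hmem k)
      rw [dif_pos (L p m k).2] at this
      exact this
  · exact ((tendsto_ladderTopology L p m).onePointNatHomeomorph hlad.1.injective
      fun k => (hlad.lt k).ne).symm.trans Ordinal.onePointNatHomeomorph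

theorem not_arrowTopT_omega0_sq_add_one {L : W → ℕ → ℕ → W} [@T2Space W (ladderTopology L)] :
    ¬ ArrowTopT (ladderTopology L) (Ordinal.omega0 ^ (2 : ℕ) + 1) := by
  let _ := ladderTopology L
  intro h
  obtain ⟨_, Y, -, ⟨e⟩⟩ := h fun _ => 0
  exact not_injective_of_continuous_ladderTopology (continuous_subtype_val.comp e.symm.continuous)
    (Subtype.val_injective.comp e.symm.injective)

/-- From a ♣_F-sequence one builds a regular topology `t` on ω₁ refining the
order topology with `(ω₁,t) → (top ω+1)¹_ω`, `(ω₁,t) ↛ (top ω²+1)¹_ω`, and such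
that every `A α m` (α limit) contains a strictly increasing sequence
`t`-converging to `α`. -/
theorem clubF_space (A : Ordinal.{0} → ℕ → Set Ordinal.{0}) (hA : IsClubF A) :
    ∃ t : TopologicalSpace W,
      @T3Space W t ∧
      t ≤ Preorder.topology W ∧
      ArrowTopT t (Ordinal.omega0 + 1) ∧
      ¬ ArrowTopT t (Ordinal.omega0 ^ (2 : ℕ) + 1) ∧
      ∀ (α : Ordinal.{0}) (hα : α < omega1), Order.IsSuccLimit α → ∀ m : ℕ,
        ∃ s : ℕ → W, StrictMono s ∧ (∀ k, (s k).1 ∈ A α m) ∧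
          Filter.Tendsto s Filter.atTop (@nhds W t ⟨α, hα⟩) := by
  obtain ⟨L, hL, hLA⟩ := hA.exists_ladderSystem
  let _ := ladderTopology L
  have := hL.t2Space
  have := hL.regularSpace
  refine ⟨ladderTopology L, inferInstance, hL.ladderTopology_le, arrowTopT_omega0_add_one hA hLA,
    not_arrowTopT_omega0_sq_add_one, fun α hα hlim m => ?_⟩
  obtain ⟨hlad, hmem⟩ := hLA ⟨α, hα⟩ hlim m
  exact ⟨L ⟨α, hα⟩ m, hlad.1, hmem, tendsto_ladderTopology L _ m⟩
end

section
/- Let ⟨p_n : n ∈ ω⟩ be a sequence of conditions in a CS*-iteration P_γ such that m < l implies p_l ≤^h p_m (horizontal extension: p_l ≤ p_m and p_l restricted to dom(p_m) equals p_m). Then r = ⋃_{n∈ω} p_n is a condition in P_γ. -/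
open Set

/-- A condition of an iteration of length `ε` is (represented by) a partial
function from ordinals to names. -/
def PF (N : Type) := Ordinal.{0} → Option N

/-- The support (domain) of a condition. -/
def psupp {N : Type} (p : PF N) : Set Ordinal.{0} := {α | (p α).isSome}

/-- Restriction `p ↾ β` of a condition. -/
noncomputable def pres {N : Type} (p : PF N) (β : Ordinal.{0}) : PF N :=
  fun α => if α < β then p α else none

/-- An abstract CS*-iteration of length `ε`: a countable support iteration in
which `diff(p,q)` is finite for comparable conditions.  The primitive
`forcesEq p β σ τ` means "`p` (playing the role of `p↾β`) forces `σ = τ` in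
`Q̇_β`", and `inQ p β σ` means "`p` forces `σ ∈ Q̇_β`". -/
structure CSStar (ε : Ordinal.{0}) where
  Name : Type
  P : Set (PF Name)
  le : PF Name → PF Name → Prop
  forcesEq : PF Name → Ordinal.{0} → Name → Name → Prop
  inQ : PF Name → Ordinal.{0} → Name → Prop
  supp_countable : ∀ p ∈ P, (psupp p).Countable
  supp_lt : ∀ p ∈ P, psupp p ⊆ Set.Iio ε
  restrict_mem : ∀ p ∈ P, ∀ β, pres p β ∈ P
  le_refl : ∀ p ∈ P, le p p
  le_trans : ∀ p q r, le p q → le q r → le p r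
  le_supp : ∀ p q, p ∈ P → q ∈ P → le p q → psupp q ⊆ psupp p
  /-- Membership in the iteration is determined coordinatewise. -/
  mem_iff : ∀ p, p ∈ P ↔ ((psupp p).Countable ∧ psupp p ⊆ Set.Iio ε ∧
    ∀ β σ, p β = some σ → pres p β ∈ P ∧ inQ (pres p β) β σ)
  /-- Horizontal extensions preserve membership in `Q̇_β`. -/
  inQ_mono : ∀ p q β σ, (∀ α ∈ psupp q, p α = q α) → inQ q β σ → inQ p β σ
  /-- CS*: the difference set of comparable conditions is finite. -/
  diff_finite : ∀ p q, p ∈ P → q ∈ P → le p q →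
    Set.Finite {β | β ∈ psupp p ∩ psupp q ∧
      ¬ ∃ σ τ, p β = some σ ∧ q β = some τ ∧ forcesEq (pres p β) β σ τ}

/-- `p ≤ʰ q`: horizontal extension. -/
def CSStar.hle {ε : Ordinal.{0}} (S : CSStar ε) (p q : PF S.Name) : Prop :=
  S.le p q ∧ ∀ α ∈ psupp q, p α = q α

/-- `p ≤ᵛ q`: vertical extension. -/
def CSStar.vle {ε : Ordinal.{0}} (S : CSStar ε) (p q : PF S.Name) : Prop :=
  S.le p q ∧ psupp p = psupp q

/-- The union of a countable family of partial functions. -/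
noncomputable def punion {N : Type} (ps : ℕ → PF N) : PF N := fun α =>
  letI := Classical.dec (∃ n, (ps n α).isSome)
  if h : ∃ n, (ps n α).isSome then ps (Nat.find h) α else none

/-- The union of an ω-chain of conditions increasing in `≤ʰ` is a condition. -/
theorem union_of_hle_chain (γ : Ordinal.{0}) (S : CSStar γ)
    (p : ℕ → PF S.Name) (hp : ∀ n, p n ∈ S.P)
    (hchain : ∀ m l : ℕ, m < l → S.hle (p l) (p m)) :
    punion p ∈ S.P := by
  classical
  set r := punion p with hr
  have hsome : ∀ α, (r α).isSome ↔ ∃ n, (p n α).isSome := by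
    intro α
    by_cases h : ∃ n, (p n α).isSome
    · have : r α = p (Nat.find h) α := by simp [hr, punion, h]
      rw [this]
      exact ⟨fun _ => h, fun _ => Nat.find_spec h⟩
    · have : r α = none := by simp [hr, punion, h]
      simp [this, h]
  have hagree : ∀ n α, (p n α).isSome → r α = p n α := by
    intro n α hα
    have h : ∃ k, (p k α).isSome := ⟨n, hα⟩
    have hfind : r α = p (Nat.find h) α := by simp [hr, punion, h]
    rw [hfind]
    rcases lt_trichotomy (Nat.find h) n with hk | hk | hk
    · exact ((hchain _ _ hk).2 α (Nat.find_spec h)).symm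
    · rw [hk]
    · exact absurd (Nat.find_min' h hα) (not_le.mpr hk)
  have hsupp : psupp r = ⋃ n, psupp (p n) := by
    ext α
    simpa [psupp, Set.mem_iUnion] using hsome α
  have hcount : (psupp r).Countable := by
    rw [hsupp]
    exact Set.countable_iUnion fun n => S.supp_countable _ (hp n)
  have hlt : psupp r ⊆ Set.Iio γ := by
    rw [hsupp]
    exact Set.iUnion_subset fun n => S.supp_lt _ (hp n)
  have hpres_pres : ∀ (β' β : Ordinal.{0}), β' ≤ β → ∀ q : PF S.Name,
      pres (pres q β) β' = pres q β' := by
    intro β' β hle q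
    funext α
    simp only [pres]
    split_ifs with h1 h2
    · rfl
    · exact absurd (h1.trans_le hle) h2
    · rfl
  have hpsub : ∀ β, psupp (pres r β) ⊆ psupp r := by
    intro β α hα
    simp only [psupp, pres, Set.mem_setOf_eq] at hα ⊢
    by_cases h : α < β
    · rwa [if_pos h] at hα
    · rw [if_neg h] at hα; simp at hα
  have hinQr : ∀ (β : Ordinal.{0}) σ, r β = some σ → S.inQ (pres r β) β σ := by
    intro β σ hσ
    have hsome' : (r β).isSome := by rw [hσ]; rfl
    obtain ⟨n, hn⟩ := (hsome β).mp hsome'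
    have hpn : p n β = some σ := by rw [← hagree n β hn, hσ]
    have hinQ : S.inQ (pres (p n) β) β σ :=
      (((S.mem_iff (p n)).mp (hp n)).2.2 β σ hpn).2
    refine S.inQ_mono _ _ _ _ ?_ hinQ
    intro α hα
    simp only [psupp, pres, Set.mem_setOf_eq] at hα ⊢
    by_cases h : α < β
    · rw [if_pos h] at hα ⊢
      rw [if_pos h]
      exact hagree n α hα
    · rw [if_neg h] at hα; simp at hα
  have key : ∀ β, pres r β ∈ S.P := by
    intro β
    induction β using Ordinal.induction with
    | h β IH =>
      rw [S.mem_iff]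
      refine ⟨hcount.mono (hpsub β), (hpsub β).trans hlt, ?_⟩
      intro β' σ hσ
      have hβ' : β' < β := by
        by_contra h
        simp [pres, h] at hσ
      have hrβ' : r β' = some σ := by
        simpa [pres, hβ'] using hσ
      rw [hpres_pres β' β hβ'.le]
      exact ⟨IH β' hβ', hinQr β' σ hrβ'⟩
  rw [S.mem_iff]
  exact ⟨hcount, hlt, fun β σ hσ => ⟨key β, hinQr β σ hσ⟩⟩
end
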